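/- Fix real constants m₀ > 0, ω > 0, ħ > 0, a > -1, γ > 1/2, set λ₀ = √(m₀ω/ħ) and α = (1/2)·( (2γ-1)/(a+1) - 1 ). For a nonnegative integer m let L_m^{(α)}(t) = Σ_{k=0}^{m} (-1)^k · Γ(m+α+1) / ( Γ(k+α+1)·(m-k)!·k! ) · t^k be the generalized Laguerre polynomial, and define ψ_{2m}(x) = (λ₀²x²)^{(a+2γ-1)/4}·exp( -(λ₀²x²)^{a+1}/(2(a+1)) )·L_m^{(α)}( (λ₀²x²)^{a+1}/(a+1) ). Then for every x ≠ 0: ψ_{2m}''(x) - (2a/x)·ψ_{2m}'(x) + [ ( a(3a+2)/4 + (a+1)(γ-1/2) - (γ-1/2)² )·x⁻² + κ²λ₀^{2a}|x|^{2a} - λ₀^{4a+4}|x|^{4a}x² ]·ψ_{2m}(x) = 0, where κ² = λ₀²·( (a+1)(4m+1) + 2γ - 1 ); equivalently ψ_{2m} solves the even-parity Schrödinger equation with energy E_{2m} = ħ²κ²/(2m₀) = (a+1)·ħω·( 2m + 1/2 + (γ-1/2)/(a+1) ). -/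

import Mathlib

/-!
Put `s = λ₀²x²`, `u = s^(a+1)/(a+1)`, `β = (a+2γ-1)/4`, so that `ψ_{2m}(x) = s^β w(u)` with the
Laguerre function `w(u) = e^(-u/2) L_m^(α)(u)`. Since `ψ_{2m}` depends on `x` only through `s`,
the operator of the statement is `λ₀²` times the radial operator
`4s ∂_s² + (2-4a) ∂_s + A/s + (κ/λ₀)² s^a - s^(2a+1)`, where `A` is the coefficient of `x⁻²`.
The substitution `f = s^β w(u)` turns the radial equation into
`u w'' + (α+1) w' + (m + (α+1)/2 - u/4) w = 0`, which for `w = e^(-u/2) L` is Laguerre's equation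
`u L'' + (α+1-u) L' + m L = 0`. That one holds coefficientwise, by the recurrence
`(k+1)(k+1+α) c_(k+1) + (m-k) c_k = 0` of the coefficients of `L_m^(α)`.
-/

noncomputable def lagPoly (α : ℝ) (m : ℕ) (t : ℝ) : ℝ :=
  ∑ k ∈ Finset.range (m + 1),
    (-1 : ℝ) ^ k * Real.Gamma ((m : ℝ) + α + 1)
      / (Real.Gamma ((k : ℝ) + α + 1) * (Nat.factorial (m - k) : ℝ) * (Nat.factorial k : ℝ))
      * t ^ k

noncomputable def psiEven (lam a γ : ℝ) (m : ℕ) (x : ℝ) : ℝ :=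
  (lam ^ 2 * x ^ 2) ^ ((a + 2 * γ - 1) / 4)
    * Real.exp (-((lam ^ 2 * x ^ 2) ^ (a + 1)) / (2 * (a + 1)))
    * lagPoly ((1 / 2) * ((2 * γ - 1) / (a + 1) - 1)) m ((lam ^ 2 * x ^ 2) ^ (a + 1) / (a + 1))

open Polynomial

noncomputable def laguerreCoeff (α : ℝ) (m k : ℕ) : ℝ :=
  (-1 : ℝ) ^ k * Real.Gamma ((m : ℝ) + α + 1)
    / (Real.Gamma ((k : ℝ) + α + 1) * (Nat.factorial (m - k) : ℝ) * (Nat.factorial k : ℝ))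

theorem laguerreCoeff_recurrence {α : ℝ} (hα : -1 < α) {m j : ℕ} (hj : j < m) :
    ((j : ℝ) + 1) * ((j : ℝ) + 1 + α) * laguerreCoeff α m (j + 1)
      + ((m : ℝ) - j) * laguerreCoeff α m j = 0 := by
  have hjα : 0 < (j : ℝ) + α + 1 := by linarith [(j.cast_nonneg : (0 : ℝ) ≤ j)]
  have hmj : (m : ℝ) - j ≠ 0 := sub_ne_zero.mpr (by exact_mod_cast hj.ne')
  have hΓ : Real.Gamma ((j : ℝ) + 1 + α + 1)
      = ((j : ℝ) + α + 1) * Real.Gamma ((j : ℝ) + α + 1) := by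
    rw [show (j : ℝ) + 1 + α + 1 = (j + α + 1) + 1 by ring, Real.Gamma_add_one hjα.ne']
  have hfac : (Nat.factorial (m - j) : ℝ) = ((m : ℝ) - j) * Nat.factorial (m - (j + 1)) := by
    rw [show m - j = m - (j + 1) + 1 by omega, Nat.factorial_succ]
    push_cast [Nat.cast_sub hj]
    ring
  have hΓpos : 0 < Real.Gamma ((j : ℝ) + α + 1) := Real.Gamma_pos_of_pos hjα
  unfold laguerreCoeff
  push_cast [Nat.factorial_succ]
  rw [hΓ, hfac]
  field_simp
  ring

noncomputable def laguerre (α : ℝ) (m : ℕ) : ℝ[X] :=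
  ∑ k ∈ Finset.range (m + 1), C (laguerreCoeff α m k) * X ^ k

theorem coeff_laguerre (α : ℝ) (m n : ℕ) :
    (laguerre α m).coeff n = if n ≤ m then laguerreCoeff α m n else 0 := by
  simp [laguerre]

theorem eval_laguerre (α : ℝ) (m : ℕ) (t : ℝ) : (laguerre α m).eval t = lagPoly α m t := by
  simp [laguerre, lagPoly, laguerreCoeff, eval_finsetSum]

theorem coeff_X_mul_derivative {R : Type*} [CommSemiring R] (p : R[X]) (n : ℕ) :
    (X * derivative p).coeff n = n * p.coeff n := by
  cases n with
  | zero => simp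
  | succ n => rw [coeff_X_mul, coeff_derivative]; push_cast; ring

theorem coeff_laguerre_recurrence {α : ℝ} (hα : -1 < α) (m n : ℕ) :
    ((n : ℝ) + 1) * ((n : ℝ) + 1 + α) * (laguerre α m).coeff (n + 1)
      + ((m : ℝ) - n) * (laguerre α m).coeff n = 0 := by
  simp only [coeff_laguerre]
  rcases lt_trichotomy n m with h | rfl | h
  · simpa [h.le, Nat.succ_le_of_lt h] using laguerreCoeff_recurrence hα h
  · simp
  · simp [h.not_ge, (h.trans (Nat.lt_succ_self n)).not_ge]

theorem laguerre_ode {α : ℝ} (hα : -1 < α) (m : ℕ) :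
    X * derivative (derivative (laguerre α m)) + (C (α + 1) - X) * derivative (laguerre α m)
      + C (m : ℝ) * laguerre α m = 0 := by
  ext n
  have h := coeff_laguerre_recurrence hα m n
  simp only [sub_mul, coeff_add, coeff_sub, coeff_C_mul, coeff_X_mul_derivative, coeff_derivative,
    coeff_zero]
  linear_combination h

noncomputable def expDamped (P : ℝ[X]) (u : ℝ) : ℝ := Real.exp (-u / 2) * P.eval u

theorem hasDerivAt_expDamped (P : ℝ[X]) (u : ℝ) :
    HasDerivAt (expDamped P) (expDamped (derivative P - C (1 / 2) * P) u) u := by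
  have hexp : HasDerivAt (fun u : ℝ => Real.exp (-u / 2)) (Real.exp (-u / 2) * (-1 / 2)) u :=
    ((hasDerivAt_neg u).div_const 2).exp
  refine (hexp.fun_mul (P.hasDerivAt u)).congr_deriv ?_
  simp only [expDamped, eval_sub, eval_mul, eval_C]
  ring

theorem deriv_expDamped (P : ℝ[X]) :
    deriv (expDamped P) = expDamped (derivative P - C (1 / 2) * P) :=
  funext fun u => (hasDerivAt_expDamped P u).deriv

theorem differentiable_expDamped (P : ℝ[X]) : Differentiable ℝ (expDamped P) :=
  fun u => (hasDerivAt_expDamped P u).differentiableAt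

theorem expDamped_laguerre_ode {α : ℝ} (hα : -1 < α) (m : ℕ) (u : ℝ) :
    u * deriv (deriv (expDamped (laguerre α m))) u + (α + 1) * deriv (expDamped (laguerre α m)) u
      + ((m : ℝ) + (α + 1) / 2 - u / 4) * expDamped (laguerre α m) u = 0 := by
  have h := congrArg (eval u) (laguerre_ode hα m)
  simp only [eval_add, eval_sub, eval_mul, eval_X, eval_C, eval_zero] at h
  simp only [deriv_expDamped, expDamped, derivative_sub, derivative_C_mul, eval_sub, eval_mul,
    eval_C]
  linear_combination Real.exp (-u / 2) * h

noncomputable def radialFn (w : ℝ → ℝ) (a p s : ℝ) : ℝ := s ^ p * w (s ^ (a + 1) / (a + 1))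

section radialFn

variable {w : ℝ → ℝ} {a s : ℝ}

theorem hasDerivAt_radialFn (p : ℝ) (ha : a + 1 ≠ 0) (hs : 0 < s)
    (hw : DifferentiableAt ℝ w (s ^ (a + 1) / (a + 1))) :
    HasDerivAt (radialFn w a p)
      (p * radialFn w a (p - 1) s + radialFn (deriv w) a (p + a) s) s := by
  have hpow : ∀ q : ℝ, HasDerivAt (fun t : ℝ => t ^ q) (q * s ^ (q - 1)) s :=
    fun q => Real.hasDerivAt_rpow_const (Or.inl hs.ne')
  have hu : HasDerivAt (fun t : ℝ => t ^ (a + 1) / (a + 1)) (s ^ a) s := by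
    refine ((hpow (a + 1)).div_const (a + 1)).congr_deriv ?_
    rw [add_sub_cancel_right]
    field_simp
  refine ((hpow p).fun_mul (hw.hasDerivAt.comp s hu)).congr_deriv ?_
  simp only [radialFn, Function.comp_apply, Real.rpow_add hs p a]
  ring

theorem deriv_radialFn_eventuallyEq (p : ℝ) (ha : a + 1 ≠ 0) (hs : 0 < s)
    (hw : Differentiable ℝ w) :
    deriv (radialFn w a p) =ᶠ[nhds s]
      fun t => p * radialFn w a (p - 1) t + radialFn (deriv w) a (p + a) t := by
  filter_upwards [lt_mem_nhds hs] with t ht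
  exact (hasDerivAt_radialFn p ha ht (hw _)).deriv

theorem hasDerivAt_deriv_radialFn (p : ℝ) (ha : a + 1 ≠ 0) (hs : 0 < s) (hw : Differentiable ℝ w)
    (hw' : Differentiable ℝ (deriv w)) :
    HasDerivAt (deriv (radialFn w a p))
      (p * ((p - 1) * radialFn w a (p - 1 - 1) s + radialFn (deriv w) a (p - 1 + a) s)
        + ((p + a) * radialFn (deriv w) a (p + a - 1) s
          + radialFn (deriv (deriv w)) a (p + a + a) s)) s :=
  (((hasDerivAt_radialFn (p - 1) ha hs (hw _)).const_mul p).add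
    (hasDerivAt_radialFn (p + a) ha hs (hw' _))).congr_of_eventuallyEq
    (deriv_radialFn_eventuallyEq p ha hs hw)

theorem radialFn_ode {α β μ : ℝ} (ha : 0 < a + 1) (hs : 0 < s)
    (hw : Differentiable ℝ w) (hw' : Differentiable ℝ (deriv w))
    (hαβ : 2 * (a + 1) * (α + 1) = 4 * β + 1)
    (hode : ∀ u, 0 < u → u * deriv (deriv w) u + (α + 1) * deriv w u + (μ - u / 4) * w u = 0) :
    4 * s * deriv (deriv (radialFn w a β)) s + (2 - 4 * a) * deriv (radialFn w a β) s
      + (2 * β * (2 * a + 1 - 2 * β) / s + 4 * (a + 1) * μ * s ^ a - s ^ (2 * a + 1))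
        * radialFn w a β s = 0 := by
  rw [(hasDerivAt_deriv_radialFn β ha.ne' hs hw hw').deriv,
    (hasDerivAt_radialFn β ha.ne' hs (hw _)).deriv]
  have hu : 0 < s ^ a * s / (a + 1) := by positivity
  have h := hode _ hu
  have hsa : s ^ (a + 1) = s ^ a * s := by rw [Real.rpow_add hs, Real.rpow_one]
  simp only [radialFn, hsa, Real.rpow_sub hs, Real.rpow_add hs, Real.rpow_one, two_mul]
  -- `4 s · s^(β+2a) w'' = 4(a+1) s^β s^a · (u w'')`; `hαβ` makes the `w'` terms cancel.
  linear_combination (norm := skip) 4 * (a + 1) * s ^ β * s ^ a * h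
    - 2 * s ^ β * s ^ a * deriv w (s ^ a * s / (a + 1)) * hαβ
  field_simp
  ring

end radialFn

section comp_mul_sq

variable {F : ℝ → ℝ} {c x : ℝ}

theorem hasDerivAt_comp_mul_sq (hF : DifferentiableAt ℝ F (c * x ^ 2)) :
    HasDerivAt (fun y => F (c * y ^ 2)) (2 * c * x * deriv F (c * x ^ 2)) x := by
  have hsq : HasDerivAt (fun y : ℝ => c * y ^ 2) (2 * c * x) x := by
    simpa [mul_comm, mul_left_comm, mul_assoc] using (hasDerivAt_pow 2 x).const_mul c
  exact (hF.hasDerivAt.comp x hsq).congr_deriv (mul_comm _ _)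

theorem deriv_deriv_comp_mul_sq (hc : 0 < c) (hx : x ≠ 0)
    (hF : ∀ s, 0 < s → DifferentiableAt ℝ F s) (hF' : DifferentiableAt ℝ (deriv F) (c * x ^ 2)) :
    deriv (deriv fun y => F (c * y ^ 2)) x
      = 2 * c * deriv F (c * x ^ 2) + 4 * c ^ 2 * x ^ 2 * deriv (deriv F) (c * x ^ 2) := by
  have hderiv : deriv (fun y => F (c * y ^ 2))
      =ᶠ[nhds x] fun y => 2 * c * y * deriv F (c * y ^ 2) := by
    filter_upwards [isOpen_ne.mem_nhds hx] with y hy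
    exact (hasDerivAt_comp_mul_sq (hF _ (by positivity))).deriv
  rw [hderiv.deriv_eq]
  refine (((hasDerivAt_id x).const_mul (2 * c)).fun_mul
    (hasDerivAt_comp_mul_sq hF')).deriv.trans ?_
  rw [id]
  ring

end comp_mul_sq

theorem rpow_mul_abs_rpow_eq {lam : ℝ} (hlam : 0 ≤ lam) (x a : ℝ) :
    lam ^ (2 * a) * |x| ^ (2 * a) = (lam ^ 2 * x ^ 2) ^ a := by
  rw [← Real.mul_rpow hlam (abs_nonneg x), ← sq_abs x, ← mul_pow,
    ← Real.rpow_natCast_mul (by positivity), Nat.cast_ofNat]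

theorem rpow_four_mul_add_four_mul_abs_rpow_eq {lam x : ℝ} (hlam : 0 < lam) (hx : x ≠ 0) (a : ℝ) :
    lam ^ (4 * a + 4) * |x| ^ (4 * a) * x ^ 2 = lam ^ 2 * (lam ^ 2 * x ^ 2) ^ (2 * a + 1) := by
  rw [← rpow_mul_abs_rpow_eq hlam.le, mul_add, mul_one, show 2 * (2 * a) = 4 * a by ring,
    show (4 : ℝ) * a + 4 = 4 * a + 2 + 2 by ring, Real.rpow_add hlam, Real.rpow_add hlam,
    Real.rpow_add (abs_pos.mpr hx)]
  simp only [Real.rpow_two, sq_abs]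
  ring

theorem psiEven_eq_radialFn (lam a γ : ℝ) (m : ℕ) :
    psiEven lam a γ m = fun x =>
      radialFn (expDamped (laguerre ((1 / 2) * ((2 * γ - 1) / (a + 1) - 1)) m))
        a ((a + 2 * γ - 1) / 4) (lam ^ 2 * x ^ 2) := by
  funext x
  simp only [psiEven, radialFn, expDamped, eval_laguerre, mul_assoc]
  rw [neg_div, neg_div, div_div, mul_comm 2 (a + 1)]

theorem psiEven_ode {lam a γ : ℝ} (hlam : 0 < lam) (ha : -1 < a) (hγ : 1 / 2 < γ) (m : ℕ) {x : ℝ}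
    (hx : x ≠ 0) :
    deriv (deriv (psiEven lam a γ m)) x - (2 * a / x) * deriv (psiEven lam a γ m) x
      + ((a * (3 * a + 2) / 4 + (a + 1) * (γ - 1 / 2) - (γ - 1 / 2) ^ 2) * (x ^ 2)⁻¹
          + (lam ^ 2 * ((a + 1) * (4 * (m : ℝ) + 1) + 2 * γ - 1)) * lam ^ (2 * a) * |x| ^ (2 * a)
          - lam ^ (4 * a + 4) * |x| ^ (4 * a) * x ^ 2) * psiEven lam a γ m x = 0 := by
  have ha₁ : 0 < a + 1 := by linarith
  rw [psiEven_eq_radialFn]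
  set α : ℝ := (1 / 2) * ((2 * γ - 1) / (a + 1) - 1) with hα_def
  set β : ℝ := (a + 2 * γ - 1) / 4 with hβ_def
  have hα : -1 < α := by
    have : 0 < (2 * γ - 1) / (a + 1) := div_pos (by linarith) ha₁
    linarith
  have hαβ : 2 * (a + 1) * (α + 1) = 4 * β + 1 := by
    rw [hα_def, hβ_def]
    field_simp
    ring
  set w := expDamped (laguerre α m)
  have hw : Differentiable ℝ w := differentiable_expDamped _
  have hw' : Differentiable ℝ (deriv w) := by
    rw [deriv_expDamped]
    exact differentiable_expDamped _
  have hs : 0 < lam ^ 2 * x ^ 2 := by positivity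
  have hF : ∀ s, 0 < s → DifferentiableAt ℝ (radialFn w a β) s :=
    fun s hs => (hasDerivAt_radialFn β ha₁.ne' hs (hw _)).differentiableAt
  have hF' := (hasDerivAt_deriv_radialFn β ha₁.ne' hs hw hw').differentiableAt
  have hode := radialFn_ode (μ := m + (α + 1) / 2) ha₁ hs hw hw' hαβ
    (fun u _ => expDamped_laguerre_ode hα m u)
  rw [deriv_deriv_comp_mul_sq (by positivity) hx hF hF', (hasDerivAt_comp_mul_sq (hF _ hs)).deriv,
    mul_assoc _ (lam ^ (2 * a)), rpow_mul_abs_rpow_eq hlam.le,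
    rpow_four_mul_add_four_mul_abs_rpow_eq hlam hx]
  linear_combination (norm := skip) lam ^ 2 * hode
  rw [hα_def, hβ_def]
  field_simp
  ring

/-- `ψ_{2m}` solves the even-parity Schrödinger equation of the deformed parabose
oscillator with `κ² = λ₀²((a+1)(4m+1)+2γ-1)`; equivalently the energy is
`E_{2m} = ħ²κ²/(2m₀) = (a+1)ħω(2m + 1/2 + (γ-1/2)/(a+1))`. -/
theorem stmt16 (m₀ ω hbar a γ : ℝ) (hm₀ : 0 < m₀) (hω : 0 < ω) (hhb : 0 < hbar)
    (ha : -1 < a) (hγ : 1 / 2 < γ)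
    (lam : ℝ) (hlam : lam = Real.sqrt (m₀ * ω / hbar)) (m : ℕ) :
    (∀ x : ℝ, x ≠ 0 →
      deriv (deriv (psiEven lam a γ m)) x - (2 * a / x) * deriv (psiEven lam a γ m) x
        + ((a * (3 * a + 2) / 4 + (a + 1) * (γ - 1 / 2) - (γ - 1 / 2) ^ 2) * (x ^ 2)⁻¹
            + (lam ^ 2 * ((a + 1) * (4 * (m : ℝ) + 1) + 2 * γ - 1)) * lam ^ (2 * a) * |x| ^ (2 * a)
            - lam ^ (4 * a + 4) * |x| ^ (4 * a) * x ^ 2) * psiEven lam a γ m x = 0) ∧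
    hbar ^ 2 * (lam ^ 2 * ((a + 1) * (4 * (m : ℝ) + 1) + 2 * γ - 1)) / (2 * m₀)
      = (a + 1) * hbar * ω * (2 * (m : ℝ) + 1 / 2 + (γ - 1 / 2) / (a + 1)) := by
  have hpos : 0 < m₀ * ω / hbar := by positivity
  have hlam_pos : 0 < lam := hlam ▸ Real.sqrt_pos.mpr hpos
  refine ⟨fun x hx => psiEven_ode hlam_pos ha hγ m hx, ?_⟩
  have ha₁ : a + 1 ≠ 0 := by linarith
  rw [hlam, Real.sq_sqrt hpos.le]
  field_simp
  ring
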